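/- arXiv:math/0510146 — 4 statements merged into one kernel-verified Lean document; each statement's English description precedes it below -/
import Mathlib

section
/- Let Ψ, Φ be frames for H₁, H₂ respectively. The map sending a bounded operator O : H₁ → H₂ to the matrix (⟨O ψ_n, φ_m⟩)_{m,n} (viewed as a bounded operator on ℓ²) is injective, and the map sending a bounded operator M on ℓ² to D_Φ ∘ M ∘ C_Ψ is surjective onto B(H₁, H₂). -/
open scoped InnerProductSpace

noncomputable section

local notation "ℓ²" => lp (fun _ : ℕ => ℂ) 2

variable {H₁ H₂ H₃ : Type*}
  [NormedAddCommGroup H₁] [InnerProductSpace ℂ H₁] [CompleteSpace H₁]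
  [NormedAddCommGroup H₂] [InnerProductSpace ℂ H₂] [CompleteSpace H₂]
  [NormedAddCommGroup H₃] [InnerProductSpace ℂ H₃] [CompleteSpace H₃]

/-- `ψ` is a Bessel sequence with bound `B`:  `∑ₖ |⟨f, ψₖ⟩|² ≤ B ‖f‖²`.
(Note: the paper's `⟨f, ψₖ⟩`, linear in `f`, is Mathlib's `⟪ψ k, f⟫_ℂ`.) -/
def IsBessel {H : Type*} [NormedAddCommGroup H] [InnerProductSpace ℂ H]
    (ψ : ℕ → H) (B : ℝ) : Prop :=
  ∀ f : H, Summable (fun k => ‖⟪ψ k, f⟫_ℂ‖ ^ 2) ∧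
    ∑' k, ‖⟪ψ k, f⟫_ℂ‖ ^ 2 ≤ B * ‖f‖ ^ 2

/-- `ψ` is a frame with bounds `A`, `B`:  `A ‖f‖² ≤ ∑ₖ |⟨f, ψₖ⟩|² ≤ B ‖f‖²`. -/
def IsFrame {H : Type*} [NormedAddCommGroup H] [InnerProductSpace ℂ H]
    (ψ : ℕ → H) (A B : ℝ) : Prop :=
  0 < A ∧ ∀ f : H, Summable (fun k => ‖⟪ψ k, f⟫_ℂ‖ ^ 2) ∧
    A * ‖f‖ ^ 2 ≤ ∑' k, ‖⟪ψ k, f⟫_ℂ‖ ^ 2 ∧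
    ∑' k, ‖⟪ψ k, f⟫_ℂ‖ ^ 2 ≤ B * ‖f‖ ^ 2

/-- `C` is the analysis operator of `ψ`:  `C f = (⟨f, ψₖ⟩)ₖ`. -/
def IsAnalysis {H : Type*} [NormedAddCommGroup H] [InnerProductSpace ℂ H]
    (ψ : ℕ → H) (C : H →L[ℂ] ℓ²) : Prop :=
  ∀ (f : H) (k : ℕ), C f k = ⟪ψ k, f⟫_ℂ

/-- `D` is the synthesis operator of `ψ`:  `D c = ∑ₖ cₖ ψₖ`. -/
def IsSynthesis {H : Type*} [NormedAddCommGroup H] [InnerProductSpace ℂ H]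
    (ψ : ℕ → H) (D : ℓ² →L[ℂ] H) : Prop :=
  ∀ c : ℓ², HasSum (fun k => c k • ψ k) (D c)

/-- `S` is the frame operator of `ψ`:  `S f = ∑ₖ ⟨f, ψₖ⟩ ψₖ`. -/
def IsFrameOp {H : Type*} [NormedAddCommGroup H] [InnerProductSpace ℂ H]
    (ψ : ℕ → H) (S : H →L[ℂ] H) : Prop :=
  ∀ f : H, HasSum (fun k => ⟪ψ k, f⟫_ℂ • ψ k) (S f)

/-- `dψ` is the canonical dual of `ψ`, whose frame operator is `S`: `dψ k = S⁻¹ ψ k`. -/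
def IsCanonicalDual {H : Type*} [NormedAddCommGroup H] [InnerProductSpace ℂ H]
    (ψ : ℕ → H) (S : H →L[ℂ] H) (dψ : ℕ → H) : Prop :=
  IsFrameOp ψ S ∧ ∀ k, S (dψ k) = ψ k

/-- `ψ` is a Riesz basis with bounds `A`, `B`: it is complete and
`A ∑|cₖ|² ≤ ‖∑ cₖ ψₖ‖² ≤ B ∑|cₖ|²` for all finite sequences `c`. -/
def IsRieszBasis {H : Type*} [NormedAddCommGroup H] [InnerProductSpace ℂ H]
    (ψ : ℕ → H) (A B : ℝ) : Prop :=
  0 < A ∧ (Submodule.span ℂ (Set.range ψ)).topologicalClosure = ⊤ ∧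
    ∀ c : ℕ →₀ ℂ,
      A * ∑ k ∈ c.support, ‖c k‖ ^ 2 ≤ ‖∑ k ∈ c.support, c k • ψ k‖ ^ 2 ∧
      ‖∑ k ∈ c.support, c k • ψ k‖ ^ 2 ≤ B * ∑ k ∈ c.support, ‖c k‖ ^ 2

/-!
A vector orthogonal to every member of a frame vanishes, by the lower frame bound. Hence the span
of `Ψ` is dense, so `O` is determined by the vectors `O ψₙ`, and each of these is determined by
its inner products with `Φ`.

For surjectivity, the lower frame bounds say that `C_Ψ` and `D_Φ† = C_Φ` are bounded below. A
bounded-below operator between Hilbert spaces has closed range, so inverting it on its range and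
composing with the orthogonal projection onto the range gives a bounded left inverse `L` of `C_Ψ`;
dually, `D_Φ` has a bounded right inverse `R`. Then `M = R ∘ O ∘ L` satisfies `D_Φ M C_Ψ = O`.
-/

section HilbertInverses

open ContinuousLinearMap

variable {𝕜 E F : Type*} [RCLike 𝕜]
  [NormedAddCommGroup E] [InnerProductSpace 𝕜 E] [CompleteSpace E]
  [NormedAddCommGroup F] [InnerProductSpace 𝕜 F] [CompleteSpace F]

theorem Submodule.closedComplemented_of_isClosed {K : Submodule 𝕜 F}
    (hK : IsClosed (K : Set F)) : K.ClosedComplemented :=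
  have : CompleteSpace K := hK.completeSpace_coe
  ⟨K.orthogonalProjectionOnto, K.orthogonalProjectionOnto_mem_subspace_eq_self⟩

theorem AntilipschitzWith.hasLeftInverse {T : E →L[𝕜] F} {K : NNReal}
    (hT : AntilipschitzWith K T) : T.HasLeftInverse :=
  have hclosed := hT.isClosed_range T.uniformContinuous
  .of_injective_of_isClosed_range_of_closedComplement_range hT.injective hclosed
    (Submodule.closedComplemented_of_isClosed hclosed)

theorem ContinuousLinearMap.hasRightInverse_of_antilipschitz_adjoint {T : E →L[𝕜] F}
    {K : NNReal} (hT : AntilipschitzWith K (adjoint T)) : T.HasRightInverse := by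
  obtain ⟨L, hL⟩ := hT.hasLeftInverse
  have hLT : L ∘L adjoint T = .id 𝕜 F := ext hL
  have hTL : T ∘L adjoint L = .id 𝕜 F := by
    rw [← adjoint_id, ← hLT, adjoint_comp, adjoint_adjoint]
  exact ⟨adjoint L, fun y => congr($hTL y)⟩

end HilbertInverses

theorem lp.norm_sq_eq_tsum {ι : Type*} {E : ι → Type*} [∀ i, NormedAddCommGroup (E i)]
    (x : lp E 2) : ‖x‖ ^ 2 = ∑' i, ‖x i‖ ^ 2 := by
  simpa using lp.norm_rpow_eq_tsum (p := 2) (by norm_num) x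

section Frames

variable {H K : Type*} [NormedAddCommGroup H] [InnerProductSpace ℂ H]
  [NormedAddCommGroup K] [InnerProductSpace ℂ K]

theorem IsFrame.eq_zero_of_forall_inner_eq_zero {ψ : ℕ → H} {A B : ℝ} (hψ : IsFrame ψ A B)
    {f : H} (hf : ∀ k, ⟪ψ k, f⟫_ℂ = 0) : f = 0 := by
  have hlower : A * ‖f‖ ^ 2 ≤ 0 := by simpa [hf] using (hψ.2 f).2.1
  simpa using nonpos_of_mul_nonpos_right hlower hψ.1

theorem IsFrame.dense_span [CompleteSpace H] {ψ : ℕ → H} {A B : ℝ} (hψ : IsFrame ψ A B) :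
    Dense (Submodule.span ℂ (Set.range ψ) : Set H) := by
  rw [Submodule.dense_iff_topologicalClosure_eq_top, Submodule.topologicalClosure_eq_top_iff,
    Submodule.eq_bot_iff]
  exact fun f hf => hψ.eq_zero_of_forall_inner_eq_zero fun k =>
    hf (ψ k) (Submodule.subset_span ⟨k, rfl⟩)

theorem IsAnalysis.norm_sq_eq_tsum {ψ : ℕ → H} {C : H →L[ℂ] ℓ²} (hC : IsAnalysis ψ C) (f : H) :
    ‖C f‖ ^ 2 = ∑' k, ‖⟪ψ k, f⟫_ℂ‖ ^ 2 := by
  simp only [lp.norm_sq_eq_tsum, hC f]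

theorem IsFrame.antilipschitz_of_isAnalysis {ψ : ℕ → H} {A B : ℝ} (hψ : IsFrame ψ A B)
    {C : H →L[ℂ] ℓ²} (hC : IsAnalysis ψ C) :
    AntilipschitzWith ⟨(√A)⁻¹, by positivity⟩ C := by
  refine C.antilipschitz_of_bound fun f => ?_
  have hsq : (√A * ‖f‖) ^ 2 ≤ ‖C f‖ ^ 2 := by
    rw [mul_pow, Real.sq_sqrt hψ.1.le, hC.norm_sq_eq_tsum]
    exact (hψ.2 f).2.1
  have := pow_le_pow_iff_left₀ (by positivity) (norm_nonneg _) two_ne_zero |>.mp hsq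
  show ‖f‖ ≤ (√A)⁻¹ * ‖C f‖
  rw [inv_mul_eq_div, le_div_iff₀ (Real.sqrt_pos.mpr hψ.1)]
  linarith

theorem IsSynthesis.apply_single {φ : ℕ → K} {D : ℓ² →L[ℂ] K} (hD : IsSynthesis φ D) (k : ℕ) :
    D (lp.single 2 k 1) = φ k := by
  refine (hD _).unique ?_
  convert hasSum_ite_eq k (φ k) using 2 with j
  by_cases hj : j = k <;> simp [hj, lp.single_apply]

theorem IsSynthesis.isAnalysis_adjoint [CompleteSpace K] {φ : ℕ → K} {D : ℓ² →L[ℂ] K}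
    (hD : IsSynthesis φ D) : IsAnalysis φ (ContinuousLinearMap.adjoint D) := by
  intro f k
  simpa [hD.apply_single] using
    (lp.inner_single_left k (1 : ℂ) (ContinuousLinearMap.adjoint D f)).symm.trans
      (ContinuousLinearMap.adjoint_inner_right D _ f)

end Frames

/-- For frames `ψ`, `φ`, the map `O ↦ (⟨O ψₙ, φₘ⟩)` is injective and the
map `M ↦ D_Φ ∘ M ∘ C_Ψ` is surjective onto `B(H₁, H₂)`. -/
theorem stmt4 {ψ : ℕ → H₁} {φ : ℕ → H₂} {A B A' B' : ℝ}
    (hΨ : IsFrame ψ A B) (hΦ : IsFrame φ A' B')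
    (C : H₁ →L[ℂ] ℓ²) (hC : IsAnalysis ψ C)
    (D : ℓ² →L[ℂ] H₂) (hD : IsSynthesis φ D) :
    (∀ O₁ O₂ : H₁ →L[ℂ] H₂,
        (∀ m n, ⟪φ m, O₁ (ψ n)⟫_ℂ = ⟪φ m, O₂ (ψ n)⟫_ℂ) → O₁ = O₂) ∧
    (∀ O : H₁ →L[ℂ] H₂, ∃ M : ℓ² →L[ℂ] ℓ², D.comp (M.comp C) = O) := by
  refine ⟨fun O₁ O₂ h => ?_, fun O => ?_⟩
  · refine ContinuousLinearMap.ext_on hΨ.dense_span ?_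
    rintro _ ⟨n, rfl⟩
    refine sub_eq_zero.mp (hΦ.eq_zero_of_forall_inner_eq_zero fun m => ?_)
    rw [inner_sub_right, h m n, sub_self]
  · obtain ⟨L, hL⟩ := (hΨ.antilipschitz_of_isAnalysis hC).hasLeftInverse
    obtain ⟨R, hR⟩ := D.hasRightInverse_of_antilipschitz_adjoint
      (hΦ.antilipschitz_of_isAnalysis hD.isAnalysis_adjoint)
    refine ⟨R ∘L O ∘L L, ContinuousLinearMap.ext fun f => ?_⟩
    simp [hL f, hR (O f)]
end
end

section
/- Let Ψ, Ξ, Φ be frames for Hilbert spaces H₁, H₃, H₂ respectively, with Ξ̃ the canonical dual of Ξ. For bounded operators P : H₁ → H₃ and O : H₃ → H₂, the matrix of the composition satisfies ⟨(O∘P) ψ_q, φ_p⟩ = ∑_k ⟨O ξ_k, φ_p⟩ · ⟨P ψ_q, ξ̃_k⟩, i.e., M^{(Φ,Ψ)}(O∘P) = M^{(Φ,Ξ)}(O) · M^{(Ξ̃,Ψ)}(P). -/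
open scoped InnerProductSpace

noncomputable section

local notation "ℓ²" => lp (fun _ : ℕ => ℂ) 2

variable {H₁ H₂ H₃ : Type*}
  [NormedAddCommGroup H₁] [InnerProductSpace ℂ H₁] [CompleteSpace H₁]
  [NormedAddCommGroup H₂] [InnerProductSpace ℂ H₂] [CompleteSpace H₂]
  [NormedAddCommGroup H₃] [InnerProductSpace ℂ H₃] [CompleteSpace H₃]

/-! The frame operator `S` of `ξ` is symmetric and, by the lower frame bound, coercive,
hence invertible. Writing `x = S g` gives the reconstruction `x = ∑ₖ ⟨x, ξ̃ₖ⟩ ξₖ`, because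
`⟨g, ξₖ⟩ = ⟨g, S ξ̃ₖ⟩ = ⟨S g, ξ̃ₖ⟩`. Applying `O` to the reconstruction of `x = P ψ_q` and pairing
with `φ_p` is the matrix identity. -/

section FrameOperator

variable {H : Type*} [NormedAddCommGroup H] [InnerProductSpace ℂ H]
  {ξ : ℕ → H} {S : H →L[ℂ] H}

theorem IsFrameOp.hasSum_inner (hS : IsFrameOp ξ S) (f g : H) :
    HasSum (fun k => ⟪ξ k, f⟫_ℂ * ⟪g, ξ k⟫_ℂ) ⟪g, S f⟫_ℂ := by
  simpa only [innerSL_apply_apply, inner_smul_right] using (hS f).mapL (innerSL ℂ g)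

theorem IsFrameOp.isSymmetric (hS : IsFrameOp ξ S) : (S : H →ₗ[ℂ] H).IsSymmetric := by
  intro f g
  simp only [ContinuousLinearMap.coe_coe]
  have hconj := (hS.hasSum_inner f g).star
  simp only [← starRingEnd_apply, map_mul, inner_conj_symm] at hconj
  exact hconj.unique (by simpa only [mul_comm] using hS.hasSum_inner g f)

theorem IsFrameOp.hasSum_norm_inner_sq (hS : IsFrameOp ξ S) (f : H) :
    HasSum (fun k => ((‖⟪ξ k, f⟫_ℂ‖ ^ 2 : ℝ) : ℂ)) ⟪f, S f⟫_ℂ := by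
  convert hS.hasSum_inner f f using 2 with k
  rw [← inner_conj_symm f (ξ k), Complex.mul_conj']
  norm_cast

theorem IsFrame.isUnit_frameOp [CompleteSpace H] {A B : ℝ} (hξ : IsFrame ξ A B)
    (hS : IsFrameOp ξ S) : IsUnit S := by
  refine S.isUnit_of_forall_le_norm_inner_map (c := A.toNNReal)
    (Real.toNNReal_pos.mpr hξ.1) fun f => ?_
  obtain ⟨hsum, hlower, -⟩ := hξ.2 f
  have hinner : ⟪f, S f⟫_ℂ = ((∑' k, ‖⟪ξ k, f⟫_ℂ‖ ^ 2 : ℝ) : ℂ) :=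
    (hS.hasSum_norm_inner_sq f).unique (Complex.hasSum_ofReal.mpr hsum.hasSum)
  calc ‖f‖ ^ 2 * A.toNNReal = A * ‖f‖ ^ 2 := by rw [Real.coe_toNNReal _ hξ.1.le, mul_comm]
    _ ≤ ∑' k, ‖⟪ξ k, f⟫_ℂ‖ ^ 2 := hlower
    _ = ‖⟪S f, f⟫_ℂ‖ := by
      rw [← norm_inner_symm, hinner, Complex.norm_real,
        Real.norm_of_nonneg (tsum_nonneg fun k => sq_nonneg _)]

theorem IsCanonicalDual.hasSum_inner_smul [CompleteSpace H] {A B : ℝ} {dξ : ℕ → H}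
    (hξ : IsFrame ξ A B) (hd : IsCanonicalDual ξ S dξ) (x : H) :
    HasSum (fun k => ⟪dξ k, x⟫_ℂ • ξ k) x := by
  obtain ⟨g, rfl⟩ := (ContinuousLinearMap.isUnit_iff_bijective.mp
    (hξ.isUnit_frameOp hd.1)).2 x
  have hcoeff : ∀ k, ⟪ξ k, g⟫_ℂ = ⟪dξ k, S g⟫_ℂ := fun k => by
    rw [← hd.2 k]
    exact hd.1.isSymmetric (dξ k) g
  simpa only [hcoeff] using hd.1 g

end FrameOperator

theorem stmt6_general {ψ : ℕ → H₁} {φ : ℕ → H₂} {ξ : ℕ → H₃} {A'' B'' : ℝ}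
    (hΞ : IsFrame ξ A'' B'')
    (SΞ : H₃ →L[ℂ] H₃) (dξ : ℕ → H₃) (hdΞ : IsCanonicalDual ξ SΞ dξ)
    (P : H₁ →L[ℂ] H₃) (O : H₃ →L[ℂ] H₂) (p q : ℕ) :
    HasSum (fun k => ⟪φ p, O (ξ k)⟫_ℂ * ⟪dξ k, P (ψ q)⟫_ℂ)
      ⟪φ p, O (P (ψ q))⟫_ℂ := by
  have hreconstruct := (hdΞ.hasSum_inner_smul hΞ (P (ψ q))).mapL O
  simpa only [map_smul, innerSL_apply_apply, inner_smul_right, smul_eq_mul, mul_comm] using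
    hreconstruct.mapL (innerSL ℂ (φ p))

/-- Composition of operators corresponds to multiplication of matrices:
`⟨(O∘P) ψ_q, φ_p⟩ = ∑ₖ ⟨O ξₖ, φ_p⟩ ⟨P ψ_q, ξ̃ₖ⟩`. -/
theorem stmt6 {ψ : ℕ → H₁} {φ : ℕ → H₂} {ξ : ℕ → H₃} {A B A' B' A'' B'' : ℝ}
    (hΨ : IsFrame ψ A B) (hΦ : IsFrame φ A' B') (hΞ : IsFrame ξ A'' B'')
    (SΞ : H₃ →L[ℂ] H₃) (dξ : ℕ → H₃) (hdΞ : IsCanonicalDual ξ SΞ dξ)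
    (P : H₁ →L[ℂ] H₃) (O : H₃ →L[ℂ] H₂) (p q : ℕ) :
    HasSum (fun k => ⟪φ p, O (ξ k)⟫_ℂ * ⟪dξ k, P (ψ q)⟫_ℂ)
      ⟪φ p, O (P (ψ q))⟫_ℂ :=
  stmt6_general hΞ SΞ dξ hdΞ P O p q
end
end

section
/- Let Φ be a Riesz basis for a Hilbert space H with canonical dual Φ̃. Then the map O ↦ (⟨O φ̃_n, φ_m⟩)_{m,n} is a Banach algebra isomorphism from B(H) onto B(ℓ²) mapping Id_H to Id_{ℓ²}, i.e., it is bijective, multiplicative, and unital. -/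
open scoped InnerProductSpace

noncomputable section

local notation "ℓ²" => lp (fun _ : ℕ => ℂ) 2

variable {H₁ H₂ H₃ : Type*}
  [NormedAddCommGroup H₁] [InnerProductSpace ℂ H₁] [CompleteSpace H₁]
  [NormedAddCommGroup H₂] [InnerProductSpace ℂ H₂] [CompleteSpace H₂]
  [NormedAddCommGroup H₃] [InnerProductSpace ℂ H₃] [CompleteSpace H₃]

/-!
A Riesz basis `φ` is the image of the standard basis of `ℓ²` under a bounded bijection
`T c = ∑ₖ cₖ φₖ`. Its adjoint `C = T†` is the analysis operator `f ↦ (⟪φₘ, f⟫)ₘ`, again an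
isomorphism `H ≃ ℓ²`. Since `S = T C`, the equation `S φ̃ₙ = φₙ = T eₙ` forces `C φ̃ₙ = eₙ`, so
`∑ₙ cₙ φ̃ₙ = C⁻¹ c` and the matrix of `O` acts on `ℓ²` as `C O C⁻¹`. Conjugation by `C` is an
isomorphism of algebras.
-/

open ContinuousLinearMap

theorem lp.hasSum_norm_sq {ι : Type*} {E : ι → Type*} [∀ i, NormedAddCommGroup (E i)]
    (f : lp E 2) : HasSum (fun i => ‖f i‖ ^ 2) (‖f‖ ^ 2) := by
  simpa [Real.rpow_two] using lp.hasSum_norm (p := 2) (by norm_num) f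

namespace ContinuousLinearEquiv

variable {𝕜 E F : Type*} [RCLike 𝕜]
  [NormedAddCommGroup E] [InnerProductSpace 𝕜 E] [CompleteSpace E]
  [NormedAddCommGroup F] [InnerProductSpace 𝕜 F] [CompleteSpace F]

def adjoint (e : E ≃L[𝕜] F) : F ≃L[𝕜] E :=
  .equivOfInverse (ContinuousLinearMap.adjoint (e : E →L[𝕜] F))
    (ContinuousLinearMap.adjoint (e.symm : F →L[𝕜] E))
    (fun y => by
      rw [← comp_apply, ← adjoint_comp, e.coe_comp_coe_symm, adjoint_id, id_apply])
    (fun x => by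
      rw [← comp_apply, ← adjoint_comp, e.coe_symm_comp_coe, adjoint_id, id_apply])

theorem adjoint_apply (e : E ≃L[𝕜] F) (y : F) :
    e.adjoint y = ContinuousLinearMap.adjoint (e : E →L[𝕜] F) y :=
  rfl

end ContinuousLinearEquiv

namespace IsRieszBasis

variable {H : Type*} [NormedAddCommGroup H] [InnerProductSpace ℂ H] {φ : ℕ → H} {A B : ℝ}

theorem sq_norm_finset_sum_bounds (hΦ : IsRieszBasis φ A B) (c : ℕ → ℂ) (F : Finset ℕ) :
    A * ∑ k ∈ F, ‖c k‖ ^ 2 ≤ ‖∑ k ∈ F, c k • φ k‖ ^ 2 ∧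
      ‖∑ k ∈ F, c k • φ k‖ ^ 2 ≤ B * ∑ k ∈ F, ‖c k‖ ^ 2 := by
  classical
  let c' : ℕ →₀ ℂ := Finsupp.onFinset F (fun k => if k ∈ F then c k else 0)
    (fun k hk => by by_contra h; simp [h] at hk)
  have hφ : ∑ k ∈ c'.support, c' k • φ k = ∑ k ∈ F, c k • φ k :=
    (Finsupp.onFinset_sum (f := fun k => if k ∈ F then c k else 0) (g := fun k a => a • φ k) _
      fun _ => zero_smul ℂ _).trans
      (Finset.sum_congr rfl fun k hk => by rw [if_pos hk])
  have hc : ∑ k ∈ c'.support, ‖c' k‖ ^ 2 = ∑ k ∈ F, ‖c k‖ ^ 2 :=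
    (Finsupp.onFinset_sum (f := fun k => if k ∈ F then c k else 0) (g := fun _ a => ‖a‖ ^ 2) _
      fun _ => by simp).trans
      (Finset.sum_congr rfl fun k hk => by rw [if_pos hk])
  simpa only [hφ, hc] using hΦ.2.2 c'

theorem lower_le_upper (hΦ : IsRieszBasis φ A B) : A ≤ B := by
  have h := hΦ.sq_norm_finset_sum_bounds (fun _ => 1) {0}
  simp only [Finset.sum_singleton, norm_one, one_pow, mul_one, one_smul] at h
  exact h.1.trans h.2

variable [CompleteSpace H]

theorem summable_smul (hΦ : IsRieszBasis φ A B) (c : ℓ²) : Summable fun k => c k • φ k := by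
  have hB : 0 < B := hΦ.1.trans_le hΦ.lower_le_upper
  refine summable_iff_vanishing_norm.mpr fun ε hε => ?_
  obtain ⟨s, hs⟩ := summable_iff_vanishing_norm.mp (lp.hasSum_norm_sq c).summable (ε ^ 2 / B)
    (by positivity)
  refine ⟨s, fun t ht => lt_of_pow_lt_pow_left₀ 2 hε.le ?_⟩
  calc ‖∑ k ∈ t, c k • φ k‖ ^ 2 ≤ B * ∑ k ∈ t, ‖c k‖ ^ 2 := (hΦ.sq_norm_finset_sum_bounds (⇑c) t).2
    _ < B * (ε ^ 2 / B) := by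
      refine mul_lt_mul_of_pos_left ((le_abs_self _).trans_lt ?_) hB
      simpa using hs t ht
    _ = ε ^ 2 := by field_simp

theorem sq_norm_tsum_bounds (hΦ : IsRieszBasis φ A B) (c : ℓ²) :
    A * ‖c‖ ^ 2 ≤ ‖∑' k, c k • φ k‖ ^ 2 ∧ ‖∑' k, c k • φ k‖ ^ 2 ≤ B * ‖c‖ ^ 2 := by
  have hc := lp.hasSum_norm_sq c
  have hφ := (hΦ.summable_smul c).hasSum.norm.pow 2
  exact ⟨le_of_tendsto_of_tendsto' (hc.mul_left A) hφ fun F => by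
      simpa only [Finset.mul_sum] using (hΦ.sq_norm_finset_sum_bounds (⇑c) F).1,
    le_of_tendsto_of_tendsto' hφ (hc.mul_left B) fun F => by
      simpa only [Finset.mul_sum] using (hΦ.sq_norm_finset_sum_bounds (⇑c) F).2⟩

def synthesis (hΦ : IsRieszBasis φ A B) : ℓ² →L[ℂ] H :=
  LinearMap.mkContinuous
    { toFun := fun c => ∑' k, c k • φ k
      map_add' := fun c d => by
        simp only [lp.coeFn_add, Pi.add_apply, add_smul]
        exact (hΦ.summable_smul c).tsum_add (hΦ.summable_smul d)
      map_smul' := fun a c => by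
        simp only [lp.coeFn_smul, Pi.smul_apply, smul_eq_mul, mul_smul, RingHom.id_apply]
        exact (hΦ.summable_smul c).tsum_const_smul a }
    (Real.sqrt B) fun c => by
      refine le_of_pow_le_pow_left₀ two_ne_zero (by positivity) ?_
      rw [mul_pow, Real.sq_sqrt (hΦ.1.le.trans hΦ.lower_le_upper)]
      exact (hΦ.sq_norm_tsum_bounds c).2

theorem hasSum_synthesis (hΦ : IsRieszBasis φ A B) (c : ℓ²) :
    HasSum (fun k => c k • φ k) (hΦ.synthesis c) :=
  (hΦ.summable_smul c).hasSum

theorem synthesis_single (hΦ : IsRieszBasis φ A B) (k : ℕ) :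
    hΦ.synthesis (lp.single 2 k 1) = φ k := by
  refine (hΦ.hasSum_synthesis _).unique ?_
  convert hasSum_ite_eq k (φ k) using 2 with j
  split_ifs with h <;> simp [h]

theorem antilipschitz_synthesis (hΦ : IsRieszBasis φ A B) :
    AntilipschitzWith ⟨(Real.sqrt A)⁻¹, by positivity⟩ hΦ.synthesis :=
  hΦ.synthesis.antilipschitz_of_bound fun c => by
    change ‖c‖ ≤ (Real.sqrt A)⁻¹ * _
    rw [inv_mul_eq_div, le_div_iff₀' (Real.sqrt_pos.mpr hΦ.1)]
    refine le_of_pow_le_pow_left₀ two_ne_zero (by positivity) ?_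
    rw [mul_pow, Real.sq_sqrt hΦ.1.le]
    exact (hΦ.sq_norm_tsum_bounds c).1

theorem surjective_synthesis (hΦ : IsRieszBasis φ A B) : Function.Surjective hΦ.synthesis := by
  have hclosed : IsClosed (Set.range hΦ.synthesis) :=
    hΦ.antilipschitz_synthesis.isClosed_range hΦ.synthesis.uniformContinuous
  have hspan : Submodule.span ℂ (Set.range φ) ≤ LinearMap.range (hΦ.synthesis : ℓ² →ₗ[ℂ] H) :=
    Submodule.span_le.mpr <| Set.range_subset_iff.mpr fun k => ⟨_, hΦ.synthesis_single k⟩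
  refine LinearMap.range_eq_top.mp (top_le_iff.mp ?_)
  rw [← hΦ.2.1]
  exact Submodule.topologicalClosure_minimal _ hspan (by rwa [LinearMap.coe_range])

def synthesisEquiv (hΦ : IsRieszBasis φ A B) : ℓ² ≃L[ℂ] H :=
  .ofBijective hΦ.synthesis (LinearMap.ker_eq_bot.mpr hΦ.antilipschitz_synthesis.injective)
    (LinearMap.range_eq_top.mpr hΦ.surjective_synthesis)

def analysisEquiv (hΦ : IsRieszBasis φ A B) : H ≃L[ℂ] ℓ² :=
  hΦ.synthesisEquiv.adjoint

theorem analysisEquiv_apply (hΦ : IsRieszBasis φ A B) (f : H) (m : ℕ) :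
    hΦ.analysisEquiv f m = ⟪φ m, f⟫_ℂ := by
  have h := adjoint_inner_right (hΦ.synthesisEquiv : ℓ² →L[ℂ] H) (lp.single 2 m 1) f
  simpa [lp.inner_single_left, synthesisEquiv, hΦ.synthesis_single, analysisEquiv,
    ContinuousLinearEquiv.adjoint_apply] using h

theorem _root_.IsFrameOp.apply_eq_synthesis_analysisEquiv {S : H →L[ℂ] H} (hS : IsFrameOp φ S)
    (hΦ : IsRieszBasis φ A B) (f : H) : S f = hΦ.synthesis (hΦ.analysisEquiv f) :=
  (hS f).unique <| by
    convert hΦ.hasSum_synthesis (hΦ.analysisEquiv f) using 2 with k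
    rw [hΦ.analysisEquiv_apply]

end IsRieszBasis

namespace IsCanonicalDual

variable {H : Type*} [NormedAddCommGroup H] [InnerProductSpace ℂ H] [CompleteSpace H]
  {φ dφ : ℕ → H} {A B : ℝ} {S : H →L[ℂ] H}

theorem analysisEquiv_apply_dual (hd : IsCanonicalDual φ S dφ) (hΦ : IsRieszBasis φ A B)
    (n : ℕ) : hΦ.analysisEquiv (dφ n) = lp.single 2 n 1 :=
  hΦ.antilipschitz_synthesis.injective <| by
    rw [← hd.1.apply_eq_synthesis_analysisEquiv hΦ, hd.2 n, hΦ.synthesis_single]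

theorem hasSum_smul (hd : IsCanonicalDual φ S dφ) (hΦ : IsRieszBasis φ A B) (c : ℓ²) :
    HasSum (fun n => c n • dφ n) (hΦ.analysisEquiv.symm c) := by
  convert (lp.hasSum_single (p := 2) ENNReal.ofNat_ne_top c).map hΦ.analysisEquiv.symm
    hΦ.analysisEquiv.symm.continuous using 1
  funext n
  have h : lp.single 2 n (c n) = c n • hΦ.analysisEquiv (dφ n) := by
    rw [hd.analysisEquiv_apply_dual hΦ, ← lp.single_smul, smul_eq_mul, mul_one]
  rw [Function.comp_apply, h, map_smul, ContinuousLinearEquiv.symm_apply_apply]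

theorem tsum_inner_mul_eq_conj (hd : IsCanonicalDual φ S dφ) (hΦ : IsRieszBasis φ A B)
    (O : H →L[ℂ] H) (c : ℓ²) (m : ℕ) :
    ∑' n, ⟪φ m, O (dφ n)⟫_ℂ * c n = hΦ.analysisEquiv.conjContinuousAlgEquiv O c m := by
  rw [ContinuousLinearEquiv.conjContinuousAlgEquiv_apply_apply, hΦ.analysisEquiv_apply]
  refine HasSum.tsum_eq ?_
  simpa [mul_comm] using (hd.hasSum_smul hΦ c).mapL ((innerSL ℂ (φ m)).comp O)

end IsCanonicalDual

/-- For a Riesz basis `φ` with canonical dual `dφ`, the map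
`O ↦ (⟨O φ̃ₙ, φₘ⟩)ₘₙ` is a Banach algebra isomorphism from `B(H)` onto `B(ℓ²)`:
bijective, linear, multiplicative and unital. -/
theorem stmt14 {φ : ℕ → H₁} {A B : ℝ}
    (hΦ : IsRieszBasis φ A B)
    (S : H₁ →L[ℂ] H₁) (dφ : ℕ → H₁) (hdΦ : IsCanonicalDual φ S dφ)
    (𝓜 : (H₁ →L[ℂ] H₁) → (ℓ² →L[ℂ] ℓ²))
    (h𝓜 : ∀ (O : H₁ →L[ℂ] H₁) (c : ℓ²) (m : ℕ),
      𝓜 O c m = ∑' n, ⟪φ m, O (dφ n)⟫_ℂ * c n) :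
    Function.Bijective 𝓜 ∧
    (∀ (a : ℂ) (O P : H₁ →L[ℂ] H₁), 𝓜 (a • O + P) = a • 𝓜 O + 𝓜 P) ∧
    (∀ O P : H₁ →L[ℂ] H₁, 𝓜 (O.comp P) = (𝓜 O).comp (𝓜 P)) ∧
    𝓜 (ContinuousLinearMap.id ℂ H₁) = ContinuousLinearMap.id ℂ ℓ² := by
  obtain rfl : 𝓜 = hΦ.analysisEquiv.conjContinuousAlgEquiv := funext fun O =>
    ext fun c => lp.ext <| funext fun m => by rw [h𝓜, hdΦ.tsum_inner_mul_eq_conj hΦ]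
  set Ψ := hΦ.analysisEquiv.conjContinuousAlgEquiv
  exact ⟨EquivLike.bijective Ψ, fun a O P => by rw [map_add, map_smul],
    fun O P => map_mul Ψ O P, map_one Ψ⟩
end
end

section
/- Let Ψ be a Bessel sequence in H₁ with bound B and Φ a Bessel sequence in H₂ with bound B'. If M is a matrix with finite Frobenius norm, then the operator D_Φ ∘ M ∘ C_Ψ is Hilbert–Schmidt with ‖D_Φ ∘ M ∘ C_Ψ‖_{HS} ≤ √(B·B')·‖M‖_{fro}. -/
open scoped InnerProductSpace ENNReal

noncomputable section

local notation "ℓ²" => lp (fun _ : ℕ => ℂ) 2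

variable {H₁ H₂ H₃ : Type*}
  [NormedAddCommGroup H₁] [InnerProductSpace ℂ H₁] [CompleteSpace H₁]
  [NormedAddCommGroup H₂] [InnerProductSpace ℂ H₂] [CompleteSpace H₂]
  [NormedAddCommGroup H₃] [InnerProductSpace ℂ H₃] [CompleteSpace H₃]

lemma bessel_finset_bound {H : Type*} [NormedAddCommGroup H] [InnerProductSpace ℂ H]
    {ψ : ℕ → H} {B : ℝ} (hΨ : IsBessel ψ B) (hB : 0 ≤ B)
    (c : ℕ → ℂ) (F : Finset ℕ) :
    ‖∑ k ∈ F, c k • ψ k‖ ≤ Real.sqrt B * Real.sqrt (∑ k ∈ F, ‖c k‖ ^ 2) := by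
  have hexp : ∀ x : H, ⟪x, ∑ k ∈ F, c k • ψ k⟫_ℂ = ∑ k ∈ F, c k * ⟪x, ψ k⟫_ℂ := by
    intro x
    rw [inner_sum]
    exact Finset.sum_congr rfl fun k _ => inner_smul_right x (ψ k) (r := c k)
  set s := ∑ k ∈ F, c k • ψ k with hs
  rcases eq_or_ne s 0 with h0 | h0
  · rw [h0]; simp; positivity
  have hspos : 0 < ‖s‖ := norm_pos_iff.2 h0
  have h2 : ‖s‖ ^ 2 = ‖⟪s, s⟫_ℂ‖ := by
    rw [inner_self_eq_norm_sq_to_K]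
    simp
  have h3 : ‖⟪s, s⟫_ℂ‖ ≤ ∑ k ∈ F, ‖c k‖ * ‖⟪ψ k, s⟫_ℂ‖ := by
    rw [hexp s]
    refine (norm_sum_le _ _).trans (le_of_eq ?_)
    exact Finset.sum_congr rfl fun k _ => by rw [norm_mul, norm_inner_symm]
  have h4 : (∑ k ∈ F, ‖c k‖ * ‖⟪ψ k, s⟫_ℂ‖) ^ 2 ≤
      (∑ k ∈ F, ‖c k‖ ^ 2) * (∑ k ∈ F, ‖⟪ψ k, s⟫_ℂ‖ ^ 2) :=
    Finset.sum_mul_sq_le_sq_mul_sq F _ _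
  have h5 : ∑ k ∈ F, ‖⟪ψ k, s⟫_ℂ‖ ^ 2 ≤ B * ‖s‖ ^ 2 :=
    (Summable.sum_le_tsum F (fun k _ => sq_nonneg _) (hΨ s).1).trans (hΨ s).2
  have hcnn : (0:ℝ) ≤ ∑ k ∈ F, ‖c k‖ ^ 2 := Finset.sum_nonneg fun k _ => sq_nonneg _
  have h6 : (∑ k ∈ F, ‖c k‖ * ‖⟪ψ k, s⟫_ℂ‖) ^ 2 ≤ (∑ k ∈ F, ‖c k‖ ^ 2) * (B * ‖s‖ ^ 2) :=
    h4.trans (mul_le_mul_of_nonneg_left h5 hcnn)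
  have hXnn : (0:ℝ) ≤ ∑ k ∈ F, ‖c k‖ * ‖⟪ψ k, s⟫_ℂ‖ :=
    Finset.sum_nonneg fun k _ => mul_nonneg (norm_nonneg _) (norm_nonneg _)
  have h7 : (∑ k ∈ F, ‖c k‖ * ‖⟪ψ k, s⟫_ℂ‖) ≤
      Real.sqrt ((∑ k ∈ F, ‖c k‖ ^ 2) * (B * ‖s‖ ^ 2)) := by
    rw [← Real.sqrt_sq hXnn]
    exact Real.sqrt_le_sqrt h6
  have h8 : Real.sqrt ((∑ k ∈ F, ‖c k‖ ^ 2) * (B * ‖s‖ ^ 2)) =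
      Real.sqrt (∑ k ∈ F, ‖c k‖ ^ 2) * (Real.sqrt B * ‖s‖) := by
    rw [Real.sqrt_mul hcnn, Real.sqrt_mul hB, Real.sqrt_sq (norm_nonneg _)]
  have key : ‖s‖ ^ 2 ≤ Real.sqrt B * Real.sqrt (∑ k ∈ F, ‖c k‖ ^ 2) * ‖s‖ := by
    calc ‖s‖ ^ 2 = ‖⟪s, s⟫_ℂ‖ := h2
      _ ≤ ∑ k ∈ F, ‖c k‖ * ‖⟪ψ k, s⟫_ℂ‖ := h3
      _ ≤ Real.sqrt ((∑ k ∈ F, ‖c k‖ ^ 2) * (B * ‖s‖ ^ 2)) := h7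
      _ = Real.sqrt B * Real.sqrt (∑ k ∈ F, ‖c k‖ ^ 2) * ‖s‖ := by rw [h8]; ring
  nlinarith [key, hspos]


lemma bessel_hasSum {H : Type*} [NormedAddCommGroup H] [InnerProductSpace ℂ H]
    [CompleteSpace H]
    {ψ : ℕ → H} {B : ℝ} (hΨ : IsBessel ψ B) (hB : 0 ≤ B)
    {c : ℕ → ℂ} (hc : Summable fun k => ‖c k‖ ^ 2) :
    ∃ g : H, HasSum (fun k => c k • ψ k) g ∧
      ‖g‖ ≤ Real.sqrt B * Real.sqrt (∑' k, ‖c k‖ ^ 2) := by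
  have hsum : Summable fun k => c k • ψ k := by
    rw [summable_iff_vanishing_norm]
    intro ε hε
    set a := Real.sqrt B with ha
    have hann : 0 ≤ a := Real.sqrt_nonneg B
    have hδ : (0:ℝ) < (ε / (a + 1)) ^ 2 := by positivity
    obtain ⟨s, hs⟩ := summable_iff_vanishing_norm.1 hc _ hδ
    refine ⟨s, fun t ht => ?_⟩
    have h2 := hs t ht
    have hnn : (0:ℝ) ≤ ∑ k ∈ t, ‖c k‖ ^ 2 := Finset.sum_nonneg fun k _ => sq_nonneg _
    rw [Real.norm_eq_abs, abs_of_nonneg hnn] at h2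
    have h3 : Real.sqrt (∑ k ∈ t, ‖c k‖ ^ 2) ≤ ε / (a + 1) := by
      rw [← Real.sqrt_sq (by positivity : (0:ℝ) ≤ ε / (a + 1))]
      exact Real.sqrt_le_sqrt h2.le
    have h4 : a * (ε / (a + 1)) < ε := by
      rw [mul_div_assoc'] at *
      rw [div_lt_iff₀ (by positivity)]
      nlinarith
    calc ‖∑ k ∈ t, c k • ψ k‖ ≤ a * Real.sqrt (∑ k ∈ t, ‖c k‖ ^ 2) :=
          bessel_finset_bound hΨ hB c t
      _ ≤ a * (ε / (a + 1)) := mul_le_mul_of_nonneg_left h3 hann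
      _ < ε := h4
  refine ⟨∑' k, c k • ψ k, hsum.hasSum, ?_⟩
  have hten := hsum.hasSum.norm
  refine le_of_tendsto hten (Filter.Eventually.of_forall fun F => ?_)
  calc ‖∑ k ∈ F, c k • ψ k‖ ≤ Real.sqrt B * Real.sqrt (∑ k ∈ F, ‖c k‖ ^ 2) :=
        bessel_finset_bound hΨ hB c F
    _ ≤ Real.sqrt B * Real.sqrt (∑' k, ‖c k‖ ^ 2) := by
        refine mul_le_mul_of_nonneg_left (Real.sqrt_le_sqrt ?_) (Real.sqrt_nonneg B)
        exact Summable.sum_le_tsum F (fun k _ => sq_nonneg _) hc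


lemma lp2_hasSum_sq {α : Type*} (f : lp (fun _ : α => ℂ) 2) :
    HasSum (fun m => ‖f m‖ ^ 2) (‖f‖ ^ 2) := by
  have h := lp.hasSum_norm (p := 2) (by norm_num) f
  have h2 : (2 : ℝ≥0∞).toReal = (2 : ℝ) := by norm_num
  rw [h2] at h
  simpa [Real.rpow_two] using h

/-- If `M` has finite Frobenius norm, then for Bessel sequences `ψ`, `φ`
the operator `D_Φ ∘ M ∘ C_Ψ` is Hilbert–Schmidt with
`‖D_Φ ∘ M ∘ C_Ψ‖_HS ≤ √(B B') ‖M‖_fro` (the HS norm computed in any ONB `e`). -/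
theorem stmt16 {ι : Type*} {ψ : ℕ → H₁} {φ : ℕ → H₂} {B B' : ℝ}
    (hΨ : IsBessel ψ B) (hΦ : IsBessel φ B')
    (C : H₁ →L[ℂ] ℓ²) (hC : IsAnalysis ψ C)
    (D : ℓ² →L[ℂ] H₂) (hD : IsSynthesis φ D)
    (e : HilbertBasis ι ℂ H₁)
    (M : ℓ² →L[ℂ] ℓ²) (Ment : ℕ → ℕ → ℂ)
    (hM : ∀ (c : ℓ²) (m : ℕ), M c m = ∑' n, Ment m n * c n)
    (hFro : Summable (fun p : ℕ × ℕ => ‖Ment p.1 p.2‖ ^ 2)) :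
    Summable (fun i => ‖(D.comp (M.comp C)) (e i)‖ ^ 2) ∧
    Real.sqrt (∑' i, ‖(D.comp (M.comp C)) (e i)‖ ^ 2) ≤
      Real.sqrt (B * B') * Real.sqrt (∑' p : ℕ × ℕ, ‖Ment p.1 p.2‖ ^ 2) := by
  have trivialcase : (∀ i, (D.comp (M.comp C)) (e i) = 0) →
      Summable (fun i => ‖(D.comp (M.comp C)) (e i)‖ ^ 2) ∧
      Real.sqrt (∑' i, ‖(D.comp (M.comp C)) (e i)‖ ^ 2) ≤
        Real.sqrt (B * B') * Real.sqrt (∑' p : ℕ × ℕ, ‖Ment p.1 p.2‖ ^ 2) := by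
    intro hz
    have h0 : (fun i => ‖(D.comp (M.comp C)) (e i)‖ ^ 2) = fun _ => (0:ℝ) := by
      funext i; rw [hz i]; simp
    rw [h0]
    refine ⟨summable_zero, ?_⟩
    rw [tsum_zero, Real.sqrt_zero]
    positivity
  by_cases hB : 0 ≤ B
  swap
  · push_neg at hB
    refine trivialcase fun i => ?_
    have hei : e i = 0 := by
      by_contra hne
      have h := (hΨ (e i)).2
      have h0 : 0 ≤ ∑' k, ‖⟪ψ k, e i⟫_ℂ‖ ^ 2 := tsum_nonneg fun k => sq_nonneg _
      have hp : 0 < ‖e i‖ ^ 2 := by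
        have := norm_pos_iff.2 hne
        positivity
      nlinarith
    simp [hei]
  by_cases hB' : 0 ≤ B'
  swap
  · push_neg at hB'
    refine trivialcase fun i => ?_
    have : ∀ f : H₂, f = 0 := by
      intro f
      by_contra hne
      have h := (hΦ f).2
      have h0 : 0 ≤ ∑' k, ‖⟪φ k, f⟫_ℂ‖ ^ 2 := tsum_nonneg fun k => sq_nonneg _
      have hp : 0 < ‖f‖ ^ 2 := by
        have := norm_pos_iff.2 hne
        positivity
      nlinarith
    exact this _
  -- main case
  have hrow : ∀ m, Summable fun n => ‖Ment m n‖ ^ 2 := fun m => hFro.prod_factor m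
  have hrow' : ∀ m, Summable fun n => ‖(starRingEnd ℂ) (Ment m n)‖ ^ 2 := by
    intro m; simpa using hrow m
  have hrowsum : Summable fun m => ∑' n, ‖Ment m n‖ ^ 2 :=
    ((summable_prod_of_nonneg fun p => sq_nonneg _).1 hFro).2
  have hgex : ∀ m, ∃ g : H₁, HasSum (fun n => (starRingEnd ℂ) (Ment m n) • ψ n) g ∧
      ‖g‖ ≤ Real.sqrt B * Real.sqrt (∑' n, ‖Ment m n‖ ^ 2) := by
    intro m
    obtain ⟨g, h1, h2⟩ := bessel_hasSum hΨ hB (hrow' m)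
    refine ⟨g, h1, h2.trans (le_of_eq ?_)⟩
    congr 2
    exact tsum_congr fun n => by simp
  choose g hg1 hg2 using hgex
  have hgsq : ∀ m, ‖g m‖ ^ 2 ≤ B * ∑' n, ‖Ment m n‖ ^ 2 := by
    intro m
    have h := hg2 m
    have hrnn : (0:ℝ) ≤ ∑' n, ‖Ment m n‖ ^ 2 := tsum_nonneg fun n => sq_nonneg _
    calc ‖g m‖ ^ 2 ≤ (Real.sqrt B * Real.sqrt (∑' n, ‖Ment m n‖ ^ 2)) ^ 2 :=
          pow_le_pow_left₀ (norm_nonneg _) h 2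
      _ = B * ∑' n, ‖Ment m n‖ ^ 2 := by
          rw [mul_pow, Real.sq_sqrt hB, Real.sq_sqrt hrnn]
  have hgsqsum : Summable fun m => ‖g m‖ ^ 2 :=
    Summable.of_nonneg_of_le (fun m => sq_nonneg _) hgsq (hrowsum.mul_left B)
  -- entry identity
  have hentry : ∀ i m, (M (C (e i))) m = ⟪g m, e i⟫_ℂ := by
    intro i m
    have h1 : HasSum (fun n => ⟪e i, (starRingEnd ℂ) (Ment m n) • ψ n⟫_ℂ) ⟪e i, g m⟫_ℂ :=
      (hg1 m).mapL (innerSL ℂ (e i))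
    have heq : ∀ n, ⟪e i, (starRingEnd ℂ) (Ment m n) • ψ n⟫_ℂ =
        (starRingEnd ℂ) (Ment m n * (C (e i)) n) := by
      intro n
      rw [inner_smul_right, map_mul, hC (e i) n, inner_conj_symm]
    have h2 : HasSum (fun n => (starRingEnd ℂ) (Ment m n * (C (e i)) n)) ⟪e i, g m⟫_ℂ :=
      h1.congr_fun fun n => (heq n).symm
    have h3 : HasSum (fun n => Ment m n * (C (e i)) n)
        ((starRingEnd ℂ) ⟪e i, g m⟫_ℂ) :=
      h2.star.congr_fun fun n => (star_star _).symm
    rw [hM (C (e i)) m, h3.tsum_eq, inner_conj_symm]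
  -- Parseval
  have hpars : ∀ m, HasSum (fun i => ‖⟪g m, e i⟫_ℂ‖ ^ 2) (‖g m‖ ^ 2) := by
    intro m
    have h := lp2_hasSum_sq (e.repr (g m))
    simp only [e.repr_apply_apply] at h
    rw [e.repr.norm_map] at h
    refine h.congr_fun fun i => ?_
    rw [norm_inner_symm]
  -- product summability
  have hF2 : Summable (fun p : ℕ × ι => ‖⟪g p.1, e p.2⟫_ℂ‖ ^ 2) := by
    refine (summable_prod_of_nonneg fun p => sq_nonneg _).2
      ⟨fun m => (hpars m).summable, ?_⟩
    exact hgsqsum.congr fun m => ((hpars m).tsum_eq).symm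
  have hswap : Summable (fun q : ι × ℕ => ‖⟪g q.2, e q.1⟫_ℂ‖ ^ 2) := hF2.prod_symm
  have hsumMC : ∀ i, HasSum (fun m => ‖⟪g m, e i⟫_ℂ‖ ^ 2) (‖M (C (e i))‖ ^ 2) := by
    intro i
    exact (lp2_hasSum_sq (M (C (e i)))).congr_fun fun m => by rw [hentry i m]
  have hMCs : Summable fun i => ‖M (C (e i))‖ ^ 2 := by
    have h1 : Summable fun i => ∑' m, ‖⟪g m, e i⟫_ℂ‖ ^ 2 :=
      ((summable_prod_of_nonneg fun q => sq_nonneg _).1 hswap).2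
    exact h1.congr fun i => (hsumMC i).tsum_eq
  -- bound for D
  have hDb : ∀ c : ℓ², ‖D c‖ ≤ Real.sqrt B' * ‖c‖ := by
    intro c
    have hns : HasSum (fun k => ‖c k‖ ^ 2) (‖c‖ ^ 2) := lp2_hasSum_sq c
    refine le_of_tendsto (hD c).norm (Filter.Eventually.of_forall fun F => ?_)
    calc ‖∑ k ∈ F, c k • φ k‖ ≤ Real.sqrt B' * Real.sqrt (∑ k ∈ F, ‖c k‖ ^ 2) :=
          bessel_finset_bound hΦ hB' _ F
      _ ≤ Real.sqrt B' * Real.sqrt (‖c‖ ^ 2) := by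
          refine mul_le_mul_of_nonneg_left (Real.sqrt_le_sqrt ?_) (Real.sqrt_nonneg _)
          rw [← hns.tsum_eq]
          exact Summable.sum_le_tsum F (fun k _ => sq_nonneg _) hns.summable
      _ = Real.sqrt B' * ‖c‖ := by rw [Real.sqrt_sq (norm_nonneg _)]
  have hDsq : ∀ c : ℓ², ‖D c‖ ^ 2 ≤ B' * ‖c‖ ^ 2 := by
    intro c
    calc ‖D c‖ ^ 2 ≤ (Real.sqrt B' * ‖c‖) ^ 2 := pow_le_pow_left₀ (norm_nonneg _) (hDb c) 2
      _ = B' * ‖c‖ ^ 2 := by rw [mul_pow, Real.sq_sqrt hB']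
  have hTle : ∀ i, ‖(D.comp (M.comp C)) (e i)‖ ^ 2 ≤ B' * ‖M (C (e i))‖ ^ 2 := by
    intro i
    exact hDsq (M (C (e i)))
  have hTs : Summable fun i => ‖(D.comp (M.comp C)) (e i)‖ ^ 2 :=
    Summable.of_nonneg_of_le (fun i => sq_nonneg _) hTle (hMCs.mul_left B')
  refine ⟨hTs, ?_⟩
  have step1 : ∑' i, ‖(D.comp (M.comp C)) (e i)‖ ^ 2 ≤ B' * ∑' i, ‖M (C (e i))‖ ^ 2 := by
    rw [← tsum_mul_left]
    exact Summable.tsum_le_tsum hTle hTs (hMCs.mul_left B')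
  have step2 : ∑' i, ‖M (C (e i))‖ ^ 2 = ∑' m, ‖g m‖ ^ 2 := by
    calc ∑' i, ‖M (C (e i))‖ ^ 2 = ∑' (i) (m), ‖⟪g m, e i⟫_ℂ‖ ^ 2 :=
          tsum_congr fun i => ((hsumMC i).tsum_eq).symm
      _ = ∑' (m) (i), ‖⟪g m, e i⟫_ℂ‖ ^ 2 :=
          Summable.tsum_comm (f := fun m i => ‖⟪g m, e i⟫_ℂ‖ ^ 2) hF2
      _ = ∑' m, ‖g m‖ ^ 2 := tsum_congr fun m => (hpars m).tsum_eq
  have step3 : ∑' m, ‖g m‖ ^ 2 ≤ B * ∑' p : ℕ × ℕ, ‖Ment p.1 p.2‖ ^ 2 := by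
    have h1 : ∑' m, ‖g m‖ ^ 2 ≤ ∑' m, B * ∑' n, ‖Ment m n‖ ^ 2 :=
      Summable.tsum_le_tsum hgsq hgsqsum (hrowsum.mul_left B)
    rw [tsum_mul_left] at h1
    rw [Summable.tsum_prod hFro]
    exact h1
  have final : ∑' i, ‖(D.comp (M.comp C)) (e i)‖ ^ 2 ≤
      B * B' * ∑' p : ℕ × ℕ, ‖Ment p.1 p.2‖ ^ 2 := by
    calc ∑' i, ‖(D.comp (M.comp C)) (e i)‖ ^ 2 ≤ B' * ∑' i, ‖M (C (e i))‖ ^ 2 := step1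
      _ = B' * ∑' m, ‖g m‖ ^ 2 := by rw [step2]
      _ ≤ B' * (B * ∑' p : ℕ × ℕ, ‖Ment p.1 p.2‖ ^ 2) :=
          mul_le_mul_of_nonneg_left step3 hB'
      _ = B * B' * ∑' p : ℕ × ℕ, ‖Ment p.1 p.2‖ ^ 2 := by ring
  calc Real.sqrt (∑' i, ‖(D.comp (M.comp C)) (e i)‖ ^ 2)
      ≤ Real.sqrt (B * B' * ∑' p : ℕ × ℕ, ‖Ment p.1 p.2‖ ^ 2) := Real.sqrt_le_sqrt final
    _ = Real.sqrt (B * B') * Real.sqrt (∑' p : ℕ × ℕ, ‖Ment p.1 p.2‖ ^ 2) :=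
        Real.sqrt_mul (mul_nonneg hB hB') _
end
end
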